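/- If T* is a refinement of a rooted phylogenetic tree T (i.e., the cluster system H(T) is a subset of H(T*)) and {u*,v*} is an edge of T* with v* strictly below u*, then there exists a unique vertex w of T such that the cluster L(T(w)) is inclusion-minimal among clusters of T strictly containing L(T*(v*)); moreover, for all leaves x,y with lca_{T*}(x,y) = u*, one has lca_T(x,y) = w. -/
import Mathlib


/-- A rooted phylogenetic tree with leaf set `L`: a finite vertex type `V`,
a root, a parent map (the root is its own parent), every vertex reaches the
root by iterating `parent`, the leaves are exactly the vertices without
children and are in bijection with `L`, and every inner vertex has at least
two children. -/
structure PhyloTree (L : Type) : Type 1 where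
  V : Type
  fintypeV : Fintype V
  root : V
  parent : V → V
  leaf : L → V
  parent_root : parent root = root
  reach : ∀ v : V, ∃ n : ℕ, parent^[n] v = root
  leaf_inj : Function.Injective leaf
  leaf_iff : ∀ v : V, (∀ u : V, parent u = v → u = v) ↔ ∃ x : L, leaf x = v
  phylo : ∀ v : V, (¬ ∃ x : L, leaf x = v) →
      ∃ u u' : V, u ≠ u' ∧ parent u = v ∧ parent u' = v ∧ u ≠ v ∧ u' ≠ v

namespace PhyloTree

variable {L : Type} (T : PhyloTree L)

/-- `v` is an ancestor (or equal) of `w`. -/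
def anc (v w : T.V) : Prop := ∃ n : ℕ, T.parent^[n] w = v

def isLeaf (v : T.V) : Prop := ∃ x : L, T.leaf x = v

/-- The cluster `L(T(v))`: the set of leaves below `v`. -/
def cluster (v : T.V) : Set L := {x : L | T.anc v (T.leaf x)}

/-- The cluster system `H(T)`. -/
def clusters : Set (Set L) := Set.range T.cluster

/-- `w` is the last common ancestor of the leaves `x` and `y`. -/
def isLCA (x y : L) (w : T.V) : Prop :=
  T.anc w (T.leaf x) ∧ T.anc w (T.leaf y) ∧
    ∀ u : T.V, T.anc u (T.leaf x) → T.anc u (T.leaf y) → T.anc u w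

/-- `u` is a child of `v`. -/
def childOf (u v : T.V) : Prop := T.parent u = v ∧ u ≠ v

/-- The edge `{parent u, u}` (encoded by its lower endpoint `u`) is an inner edge. -/
def innerEdge (u : T.V) : Prop := T.parent u ≠ u ∧ ¬ T.isLeaf u

/-- The edge `{parent u, u}` lies on the path from the vertex `w` down to the leaf `y`. -/
def onPath (w : T.V) (y : L) (u : T.V) : Prop :=
  T.anc w u ∧ u ≠ w ∧ T.anc u (T.leaf y)

/-- The vertex-labeled tree `(T,t)` explains `δ`. -/
def ExplainsDelta {M : Type} (t : T.V → M) (δ : L → L → M) : Prop :=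
  ∀ x y : L, x ≠ y → ∀ w : T.V, T.isLCA x y w → t w = δ x y

/-- The edge-labeled tree `(T,λ)` explains `ε`; edge labels are encoded on the
lower endpoint of each edge. -/
def ExplainsEps {N : Type} (lam : T.V → Finset N) (ε : L → L → Finset N) : Prop :=
  ∀ x y : L, x ≠ y → ∀ w : T.V, T.isLCA x y w →
    ∀ k : N, k ∈ ε x y ↔ ∃ u : T.V, T.onPath w y u ∧ k ∈ lam u

/-- The vertex labeling is discriminating: the endpoints of every inner edge
carry distinct labels. -/
def Discriminating {M : Type} (t : T.V → M) : Prop :=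
  ∀ u : T.V, T.innerEdge u → t u ≠ t (T.parent u)

/-- Total number of labels over all edges, `Σ_{e ∈ E(T)} |λ(e)|`. -/
noncomputable def labelSum {N : Type} (lam : T.V → Finset N) : ℕ :=
  letI := T.fintypeV
  letI := Classical.decEq T.V
  ∑ v : T.V, if T.parent v = v then 0 else (lam v).card

/-- Condition (C): every inner vertex has a child joined by an empty-labeled edge. -/
def CondC {N : Type} (lam : T.V → Finset N) : Prop :=
  ∀ v : T.V, ¬ T.isLeaf v → ∃ u : T.V, T.childOf u v ∧ lam u = ∅

/-- Condition (C1): if `t(v) ∈ M₀` then all edges from `v` to its children are empty. -/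
def CondC1 {M N : Type} (t : T.V → M) (lam : T.V → Finset N) (M0 : Set M) : Prop :=
  ∀ v u : T.V, T.childOf u v → t v ∈ M0 → lam u = ∅

/-- Condition (C2): at every vertex, at most one edge to a child is nonempty. -/
def CondC2 {N : Type} (lam : T.V → Finset N) : Prop :=
  ∀ v u u' : T.V, T.childOf u v → T.childOf u' v → lam u ≠ ∅ → lam u' ≠ ∅ → u = u'

/-- `(T1,λ1) ≤ (T2,λ2)`: the edge-labeled tree `(T2,λ2)` refines `(T1,λ1)`. -/
def LeLabeled {N : Type} (T1 : PhyloTree L) (lam1 : T1.V → Finset N)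
    (T2 : PhyloTree L) (lam2 : T2.V → Finset N) : Prop :=
  T1.clusters ⊆ T2.clusters ∧
    ∀ (v1 : T1.V) (v2 : T2.V), T1.parent v1 ≠ v1 → T2.parent v2 ≠ v2 →
      T1.cluster v1 = T2.cluster v2 → lam1 v1 ⊆ lam2 v2

/-- `φ` witnesses that `T'` is obtained from `T` by contracting the inner edge
`{parent u, u}`. -/
def IsContractionMap (T : PhyloTree L) (u : T.V) (T' : PhyloTree L)
    (φ : T.V → T'.V) : Prop :=
  T.innerEdge u ∧ Function.Surjective φ ∧ φ u = φ (T.parent u) ∧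
    (∀ a b : T.V, φ a = φ b →
      a = b ∨ (a = u ∧ b = T.parent u) ∨ (b = u ∧ a = T.parent u)) ∧
    (∀ v : T.V, v ≠ u → T'.parent (φ v) = φ (T.parent v)) ∧
    (∀ x : L, φ (T.leaf x) = T'.leaf x) ∧ φ T.root = T'.root

/-- `T'` is obtained from `T` by contracting the inner edge `{parent u, u}`. -/
def ContractEdge (T : PhyloTree L) (u : T.V) (T' : PhyloTree L) : Prop :=
  ∃ φ : T.V → T'.V, IsContractionMap T u T' φ

/-- Isomorphism of rooted trees on the same leaf set. -/
def Isomorphic (T1 T2 : PhyloTree L) : Prop :=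
  ∃ φ : T1.V ≃ T2.V, (∀ v : T1.V, φ (T1.parent v) = T2.parent (φ v)) ∧
    ∀ x : L, φ (T1.leaf x) = T2.leaf x

def IsSymbolicUltrametric {M : Type} (δ : L → L → M) : Prop :=
  ∃ (T : PhyloTree L) (t : T.V → M), T.ExplainsDelta t δ

def IsFitchMap {N : Type} (ε : L → L → Finset N) : Prop :=
  ∃ (T : PhyloTree L) (lam : T.V → Finset N), T.ExplainsEps lam ε

def TreeLike {M N : Type} (δ : L → L → M) (ε : L → L → Finset N) : Prop :=
  ∃ (T : PhyloTree L) (t : T.V → M) (lam : T.V → Finset N),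
    T.ExplainsDelta t δ ∧ T.ExplainsEps lam ε

def MTreeLike {M N : Type} (δ : L → L → M) (ε : L → L → Finset N) (M0 : Set M) : Prop :=
  ∃ (T : PhyloTree L) (t : T.V → M) (lam : T.V → Finset N),
    T.ExplainsDelta t δ ∧ T.ExplainsEps lam ε ∧ T.CondC lam ∧ T.CondC1 t lam M0

end PhyloTree

/-- A hierarchy on `L`. -/
def IsHierarchy {L : Type} (H : Set (Set L)) : Prop :=
  Set.univ ∈ H ∧ (∀ x : L, {x} ∈ H) ∧
    (∀ A ∈ H, ∀ B ∈ H, A ∩ B = A ∨ A ∩ B = B ∨ A ∩ B = (∅ : Set L)) ∧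
    (∅ : Set L) ∉ H
namespace PhyloTree

variable {L : Type} {T : PhyloTree L}

lemma anc_refl' (T : PhyloTree L) (v : T.V) : T.anc v v := ⟨0, rfl⟩

lemma anc_trans' {u v w : T.V} (h1 : T.anc u v) (h2 : T.anc v w) : T.anc u w := by
  obtain ⟨n, hn⟩ := h1; obtain ⟨m, hm⟩ := h2
  exact ⟨n + m, by rw [Function.iterate_add_apply, hm, hn]⟩

lemma root_fixed' (T : PhyloTree L) (n : ℕ) : T.parent^[n] T.root = T.root :=
  Function.iterate_fixed T.parent_root n

lemma anc_antisymm' {u v : T.V} (h1 : T.anc u v) (h2 : T.anc v u) : u = v := by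
  obtain ⟨n, hn⟩ := h1; obtain ⟨m, hm⟩ := h2
  rcases Nat.eq_zero_or_pos (m + n) with h0 | hpos
  · have hn0 : n = 0 := by omega
    simpa [hn0] using hn.symm
  · have hcyc : T.parent^[m + n] v = v := by
      rw [Function.iterate_add_apply, hn, hm]
    have hpow : ∀ c : ℕ, T.parent^[c * (m + n)] v = v := by
      intro c
      induction c with
      | zero => simp
      | succ k ih => rw [Nat.succ_mul, Function.iterate_add_apply, hcyc, ih]
    obtain ⟨k, hk⟩ := T.reach v
    have hvroot : v = T.root := by
      have h1 : k ≤ k * (m + n) := Nat.le_mul_of_pos_right k hpos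
      have : T.parent^[k * (m + n)] v = T.root := by
        rw [show k * (m + n) = (k * (m + n) - k) + k by omega,
          Function.iterate_add_apply, hk, root_fixed']
      rw [hpow k] at this; exact this
    subst hvroot
    rw [root_fixed'] at hn; exact hn.symm

lemma anc_comparable' {u u' z : T.V} (h1 : T.anc u z) (h2 : T.anc u' z) :
    T.anc u u' ∨ T.anc u' u := by
  obtain ⟨n, hn⟩ := h1; obtain ⟨m, hm⟩ := h2
  rcases le_total n m with h | h
  · right
    exact ⟨m - n, by rw [← hn, ← Function.iterate_add_apply, Nat.sub_add_cancel h, hm]⟩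
  · left
    exact ⟨n - m, by rw [← hm, ← Function.iterate_add_apply, Nat.sub_add_cancel h, hn]⟩

lemma anc_parent_of_ne' {u v : T.V} (h : T.anc u v) (hne : u ≠ v) :
    T.anc u (T.parent v) := by
  obtain ⟨n, hn⟩ := h
  rcases Nat.eq_zero_or_pos n with h0 | hpos
  · have hv : v = u := by simpa [h0] using hn
    exact absurd hv.symm hne
  · refine ⟨n - 1, ?_⟩
    have hh : T.parent^[n - 1] (T.parent^[1] v) = u := by
      rw [← Function.iterate_add_apply, show n - 1 + 1 = n by omega]; exact hn
    simpa using hh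

lemma anc_child' {u v : T.V} (h : T.childOf u v) : T.anc v u := by
  refine ⟨1, ?_⟩
  simpa using h.1

/-- If `u` is a strict ancestor of `v`, there is a child of `u` on the path to `v`. -/
lemma exists_child_on_path' {u v : T.V} (h : T.anc u v) (hne : u ≠ v) :
    ∃ c : T.V, T.childOf c u ∧ T.anc c v := by
  classical
  have hex : ∃ n, T.parent^[n] v = u := h
  set n₀ := Nat.find hex with hn₀
  have hspec : T.parent^[n₀] v = u := Nat.find_spec hex
  have hpos : 0 < n₀ := by
    rcases Nat.eq_zero_or_pos n₀ with h0 | h1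
    · have hv : v = u := by simpa [h0] using hspec
      exact absurd hv.symm hne
    · exact h1
  refine ⟨T.parent^[n₀ - 1] v, ⟨?_, ?_⟩, ⟨n₀ - 1, rfl⟩⟩
  · have hh : T.parent^[(n₀ - 1) + 1] v = u := by
      rw [show n₀ - 1 + 1 = n₀ by omega]; exact hspec
    rw [Function.iterate_succ_apply'] at hh
    exact hh
  · intro hEq
    have : n₀ ≤ n₀ - 1 := Nat.find_le hEq
    omega

lemma cluster_mono' {u v : T.V} (h : T.anc u v) : T.cluster v ⊆ T.cluster u :=
  fun _ hx => anc_trans' h hx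

lemma exists_leaf_below' (T : PhyloTree L) (v : T.V) : ∃ x : L, T.anc v (T.leaf x) := by
  classical
  letI := T.fintypeV
  generalize hn : {z | T.anc v z}.ncard = n
  induction n using Nat.strong_induction_on generalizing v with
  | _ n ih =>
    by_cases hv : T.isLeaf v
    · obtain ⟨x, hx⟩ := hv
      exact ⟨x, hx ▸ anc_refl' T v⟩
    · obtain ⟨u, u', hne, hpu, hpu', hu, hu'⟩ := T.phylo v hv
      have hanc : T.anc v u := anc_child' ⟨hpu, hu⟩
      have hsub : {z | T.anc u z} ⊂ {z | T.anc v z} := by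
        constructor
        · intro z hz; exact anc_trans' hanc hz
        · intro hcon
          have : T.anc u v := hcon (anc_refl' T v)
          exact hu (anc_antisymm' this hanc)
      have hlt : {z | T.anc u z}.ncard < n := by
        rw [← hn]
        exact Set.ncard_lt_ncard hsub (Set.toFinite _)
      obtain ⟨x, hx⟩ := ih _ hlt u rfl
      exact ⟨x, anc_trans' hanc hx⟩

lemma cluster_nonempty' (T : PhyloTree L) (v : T.V) : (T.cluster v).Nonempty :=
  exists_leaf_below' T v

lemma sibling_anc_false' {u u' v : T.V} (h : T.childOf u v) (h' : T.childOf u' v)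
    (hne : u ≠ u') (hanc : T.anc u u') : False := by
  have h1 : T.anc u (T.parent u') := anc_parent_of_ne' hanc hne
  rw [h'.1] at h1
  exact h.2 (anc_antisymm' h1 (anc_child' h))

lemma sibling_disjoint' {u u' v : T.V} (h : T.childOf u v) (h' : T.childOf u' v)
    (hne : u ≠ u') {x : L} (hx : x ∈ T.cluster u) (hx' : x ∈ T.cluster u') : False := by
  rcases anc_comparable' (z := T.leaf x) hx hx' with hc | hc
  · exact sibling_anc_false' h h' hne hc
  · exact sibling_anc_false' h' h hne.symm hc

lemma not_isLeaf_of_child' {u v : T.V} (h : T.childOf u v) : ¬ T.isLeaf v := by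
  intro hv
  exact h.2 (((T.leaf_iff v).2 hv) u h.1)

lemma childOf_cluster_ssubset' {u v : T.V} (h : T.childOf u v) :
    T.cluster u ⊂ T.cluster v := by
  refine ⟨cluster_mono' (anc_child' h), ?_⟩
  intro hcon
  obtain ⟨c, c', hne, hpc, hpc', hc, hc'⟩ := T.phylo v (not_isLeaf_of_child' h)
  have : ∃ d : T.V, T.childOf d v ∧ d ≠ u := by
    by_cases hcu : c = u
    · exact ⟨c', ⟨hpc', hc'⟩, by rw [← hcu]; exact hne.symm⟩
    · exact ⟨c, ⟨hpc, hc⟩, hcu⟩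
  obtain ⟨d, hd, hdu⟩ := this
  obtain ⟨x, hx⟩ := cluster_nonempty' T d
  have hxv : x ∈ T.cluster v := cluster_mono' (anc_child' hd) hx
  exact sibling_disjoint' hd h hdu hx (hcon hxv)

lemma anc_of_cluster_subset' {u v : T.V} (h : T.cluster u ⊆ T.cluster v) :
    T.anc v u := by
  obtain ⟨x, hx⟩ := cluster_nonempty' T u
  have hx' : x ∈ T.cluster v := h hx
  rcases anc_comparable' (z := T.leaf x) hx hx' with hc | hc
  · by_cases heq : u = v
    · exact heq ▸ anc_refl' T u
    · obtain ⟨c, hcchild, hcanc⟩ := exists_child_on_path' hc heq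
      have h1 : T.cluster v ⊆ T.cluster c := cluster_mono' hcanc
      have h2 : T.cluster c ⊂ T.cluster u := childOf_cluster_ssubset' hcchild
      exact absurd (h.trans h1) h2.2
  · exact hc

lemma cluster_inj' {u v : T.V} (h : T.cluster u = T.cluster v) : u = v :=
  anc_antisymm' (anc_of_cluster_subset' h.ge) (anc_of_cluster_subset' h.le)

lemma exists_isLCA' (T : PhyloTree L) (x y : L) : ∃ z : T.V, T.isLCA x y z := by
  classical
  have hex : ∃ n, T.anc (T.parent^[n] (T.leaf x)) (T.leaf y) := by
    obtain ⟨k, hk⟩ := T.reach (T.leaf x)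
    obtain ⟨m, hm⟩ := T.reach (T.leaf y)
    exact ⟨k, by rw [hk]; exact ⟨m, hm⟩⟩
  refine ⟨T.parent^[Nat.find hex] (T.leaf x), ⟨Nat.find hex, rfl⟩, Nat.find_spec hex, ?_⟩
  rintro u ⟨m, hm⟩ hy
  have hle : Nat.find hex ≤ m := Nat.find_min' hex (by rw [hm]; exact hy)
  exact ⟨m - Nat.find hex, by
    rw [← Function.iterate_add_apply, Nat.sub_add_cancel hle, hm]⟩

end PhyloTree

/-- If `T*` refines `T` and `{u*,v*}` is an edge of `T*` with
`v*` strictly below `u* = parent v*`, then there is a unique vertex `w` of `T`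
whose cluster is inclusion-minimal among clusters of `T` strictly containing
`L(T*(v*))`; moreover `lca_{T*}(x,y) = u*` implies `lca_T(x,y) = w`. -/
theorem statement0 {L : Type} (T Tstar : PhyloTree L)
    (href : T.clusters ⊆ Tstar.clusters)
    (vstar : Tstar.V) (hedge : Tstar.parent vstar ≠ vstar) :
    ∃! w : T.V,
      (Tstar.cluster vstar ⊂ T.cluster w ∧
        ∀ w' : T.V, Tstar.cluster vstar ⊂ T.cluster w' → T.cluster w ⊆ T.cluster w') ∧
      ∀ x y : L, Tstar.isLCA x y (Tstar.parent vstar) → T.isLCA x y w := by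
  classical
  letI := T.fintypeV
  letI : Fintype L := Fintype.ofInjective T.leaf T.leaf_inj
  set C := Tstar.cluster vstar with hCdef
  set ustar := Tstar.parent vstar with hustar
  have hchild : Tstar.childOf vstar ustar := ⟨rfl, Ne.symm hedge⟩
  have hCsub : C ⊂ Tstar.cluster ustar := PhyloTree.childOf_cluster_ssubset' hchild
  -- the root of T is a candidate
  have hrootS : C ⊂ T.cluster T.root := by
    constructor
    · intro x _
      exact T.reach (T.leaf x)
    · intro hcon
      obtain ⟨x, hx1, hx2⟩ := Set.exists_of_ssubset hCsub
      exact hx2 (hcon (T.reach (T.leaf x)))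
  -- choose a candidate with minimal cluster cardinality
  obtain ⟨w, hwF, hwmin⟩ := Finset.exists_min_image
    (Finset.univ.filter (fun w : T.V => C ⊂ T.cluster w))
    (fun w => (T.cluster w).ncard)
    ⟨T.root, by simp [hrootS]⟩
  have hCw : C ⊂ T.cluster w := (Finset.mem_filter.1 hwF).2
  obtain ⟨x₀, hx₀⟩ := PhyloTree.cluster_nonempty' Tstar vstar
  -- minimality of the cluster of w
  have hmin : ∀ w' : T.V, C ⊂ T.cluster w' → T.cluster w ⊆ T.cluster w' := by
    intro w' hw'
    have hx₀w : x₀ ∈ T.cluster w := hCw.1 hx₀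
    have hx₀w' : x₀ ∈ T.cluster w' := hw'.1 hx₀
    rcases PhyloTree.anc_comparable' (z := T.leaf x₀) hx₀w hx₀w' with hc | hc
    · have hsub : T.cluster w' ⊆ T.cluster w := PhyloTree.cluster_mono' hc
      have hcard : (T.cluster w).ncard ≤ (T.cluster w').ncard :=
        hwmin w' (Finset.mem_filter.2 ⟨Finset.mem_univ _, hw'⟩)
      have := Set.eq_of_subset_of_ncard_le hsub hcard (Set.toFinite _)
      rw [this]
    · exact PhyloTree.cluster_mono' hc
  -- the key inclusion: cluster of ustar ⊆ cluster of w
  have hkey : Tstar.cluster ustar ⊆ T.cluster w := by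
    obtain ⟨a, ha⟩ := href ⟨w, rfl⟩
    have hCa : C ⊆ Tstar.cluster a := by rw [ha]; exact hCw.1
    have hanc : Tstar.anc a vstar := PhyloTree.anc_of_cluster_subset' hCa
    have hane : a ≠ vstar := by
      intro h
      apply hCw.2
      rw [hCdef, ← h, ha]
    have hancu : Tstar.anc a ustar := by
      rw [hustar]
      exact PhyloTree.anc_parent_of_ne' hanc hane
    calc Tstar.cluster ustar ⊆ Tstar.cluster a := PhyloTree.cluster_mono' hancu
      _ = T.cluster w := ha
  refine ⟨w, ⟨⟨hCw, hmin⟩, ?_⟩, ?_⟩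
  · -- lca transfer
    intro x y hxy
    have hx : x ∈ T.cluster w := hkey hxy.1
    have hy : y ∈ T.cluster w := hkey hxy.2.1
    refine ⟨hx, hy, ?_⟩
    intro u hux huy
    obtain ⟨b, hb⟩ := href ⟨u, rfl⟩
    have hbx : Tstar.anc b (Tstar.leaf x) := by
      have : x ∈ T.cluster u := hux
      rw [← hb] at this; exact this
    have hby : Tstar.anc b (Tstar.leaf y) := by
      have : y ∈ T.cluster u := huy
      rw [← hb] at this; exact this
    have hbu : Tstar.anc b ustar := hxy.2.2 b hbx hby
    have h1 : C ⊂ T.cluster u := by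
      refine lt_of_lt_of_le hCsub ?_
      calc Tstar.cluster ustar ⊆ Tstar.cluster b := PhyloTree.cluster_mono' hbu
        _ = T.cluster u := hb
    have h2 : T.cluster w ⊆ T.cluster u := hmin u h1
    rcases PhyloTree.anc_comparable' (z := T.leaf x) hux hx with hc | hc
    · exact hc
    · have h3 : T.cluster u ⊆ T.cluster w := PhyloTree.cluster_mono' hc
      have : u = w := PhyloTree.cluster_inj' (subset_antisymm h3 h2)
      exact this ▸ PhyloTree.anc_refl' T u
  · -- uniqueness
    rintro w' ⟨⟨hC', hmin'⟩, _⟩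
    exact PhyloTree.cluster_inj' (subset_antisymm (hmin' w hCw) (hmin w' hC'))
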